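/- arXiv:0803.1657 — 2 statements merged into one kernel-verified Lean document; each statement's English description precedes it below -/
import Mathlib

section
/- Let V ⊆ C^∞_{even}(ℝ) be a closed subspace invariant under symmetric translations f ↦ f_s + f_{-s} (where f_s(t) = f(t+s)) for all s ∈ ℝ. If V contains the nonzero function t ↦ -t·sin(λt) for some λ ≠ 0, then V contains t ↦ cos(λt). -/
/-- a closed subspace `V` of smooth even functions on `ℝ`, invariant under
`f ↦ f_s + f_{-s}` for all `s`, containing the nonzero function `t ↦ -t·sin(λt)` for some
`λ ≠ 0`, also contains `t ↦ cos(λt)`. -/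
theorem stmt_12 (V : Submodule ℂ (ℝ → ℂ)) (hclosed : IsClosed (V : Set (ℝ → ℂ)))
    (hsmooth : ∀ f ∈ V, ContDiff ℝ (⊤ : ℕ∞) f) (heven : ∀ f ∈ V, ∀ t : ℝ, f (-t) = f t)
    (hinv : ∀ f ∈ V, ∀ s : ℝ, (fun t : ℝ => f (t + s) + f (t - s)) ∈ V)
    (lam : ℂ) (hlam : lam ≠ 0)
    (hmem : (fun t : ℝ => -(t : ℂ) * Complex.sin (lam * (t : ℂ))) ∈ V)
    (hne : (fun t : ℝ => -(t : ℂ) * Complex.sin (lam * (t : ℂ))) ≠ 0) :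
    (fun t : ℝ => Complex.cos (lam * (t : ℂ))) ∈ V := by
  -- choose s with s ≠ 0 and sin (λ s) ≠ 0
  obtain ⟨s, hs0, hsin⟩ : ∃ s : ℝ, (s : ℂ) ≠ 0 ∧ Complex.sin (lam * (s : ℂ)) ≠ 0 := by
    by_cases h1 : Complex.sin lam = 0
    · refine ⟨(Real.pi)⁻¹, ?_, ?_⟩
      · simpa using Real.pi_ne_zero
      · intro h2
        rw [Complex.sin_eq_zero_iff] at h1 h2
        obtain ⟨k, hk⟩ := h1
        obtain ⟨m, hm⟩ := h2
        rw [hk] at hm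
        -- hm : k * π * (π⁻¹ : ℝ) = m * π  in ℂ
        have hπ : ((Real.pi : ℂ)) ≠ 0 := by
          exact_mod_cast (Complex.ofReal_ne_zero.mpr Real.pi_ne_zero)
        have hkm : (k : ℂ) = (m : ℂ) * Real.pi := by
          have : ((Real.pi)⁻¹ : ℝ) = ((Real.pi : ℂ))⁻¹ := by push_cast; ring
          rw [this] at hm
          field_simp at hm
          -- hm should give k = m * π
          linear_combination hm
        have hkmR : (k : ℝ) = (m : ℝ) * Real.pi := by
          exact_mod_cast hkm
        rcases eq_or_ne m 0 with hm0 | hm0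
        · subst hm0
          simp at hkmR
          rw [hkmR] at hk
          simp at hk
          exact hlam hk
        · have : Real.pi = (k : ℝ) / (m : ℝ) := by
            field_simp at hkmR ⊢
            linarith [hkmR]
          exact irrational_pi ⟨(k : ℚ) / (m : ℚ), by push_cast [this]; ring⟩
    · exact ⟨1, by norm_num, by simpa using h1⟩
  set ψ : ℝ → ℂ := fun t : ℝ => -(t : ℂ) * Complex.sin (lam * (t : ℂ)) with hψ
  have h1 : (fun t : ℝ => ψ (t + s) + ψ (t - s)) ∈ V := hinv ψ hmem s
  have h2 : ((fun t : ℝ => ψ (t + s) + ψ (t - s)) - (2 * Complex.cos (lam * s)) • ψ) ∈ V :=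
    V.sub_mem h1 (V.smul_mem _ hmem)
  set c : ℂ := -2 * (s : ℂ) * Complex.sin (lam * (s : ℂ)) with hc
  have hcne : c ≠ 0 := by
    simp only [hc]
    exact mul_ne_zero (mul_ne_zero (by norm_num) hs0) hsin
  have h3 : c⁻¹ • ((fun t : ℝ => ψ (t + s) + ψ (t - s)) - (2 * Complex.cos (lam * s)) • ψ) ∈ V :=
    V.smul_mem _ h2
  have key : (fun t : ℝ => Complex.cos (lam * (t : ℂ))) =
      c⁻¹ • ((fun t : ℝ => ψ (t + s) + ψ (t - s)) - (2 * Complex.cos (lam * s)) • ψ) := by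
    funext t
    simp only [Pi.smul_apply, Pi.sub_apply, smul_eq_mul, hψ, hc]
    have e : (fun t : ℝ => ψ (t + s)) t + ψ (t - s) - 2 * Complex.cos (lam * s) * ψ t
        = c * Complex.cos (lam * t) := by
      simp only [hψ, hc]
      push_cast
      rw [mul_add, mul_sub, Complex.sin_add, Complex.sin_sub]
      ring
    rw [eq_inv_mul_iff_mul_eq₀ hcne]
    push_cast
    rw [mul_add, mul_sub, Complex.sin_add, Complex.sin_sub]
    ring
  rw [key]
  exact h3
end

section
/- In the Euclidean model case p = q = 0 (so X = ℝ), let r₁, r₂ > 0: if f : ℝ → ℂ is continuous with ∫_{x-r₁}^{x+r₁} f = 0 and ∫_{x-r₂}^{x+r₂} f = 0 for all x ∈ ℝ, and sin(λr₁)/λ and sin(λr₂)/λ have no common zero λ ∈ ℂ (equivalently r₁/r₂ is not a ratio of two zeros of sin, i.e., not rational), then f is identically 0. -/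
/-- flat two-radius theorem for balls: if all window averages of a continuous
`f : ℝ → ℂ` of widths `2r₁` and `2r₂` vanish and `r₁/r₂` is irrational, then `f = 0`. -/
theorem stmt_17 (f : ℝ → ℂ) (hf : Continuous f) (r₁ r₂ : ℝ) (hr₁ : 0 < r₁) (hr₂ : 0 < r₂)
    (hirr : Irrational (r₁ / r₂))
    (h₁ : ∀ x : ℝ, ∫ t in (x - r₁)..(x + r₁), f t = 0)
    (h₂ : ∀ x : ℝ, ∫ t in (x - r₂)..(x + r₂), f t = 0) :
    f = 0 := by
  set F : ℝ → ℂ := fun x => ∫ t in (0:ℝ)..x, f t with hF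
  have hint : ∀ a b : ℝ, IntervalIntegrable f MeasureTheory.volume a b := fun a b =>
    hf.intervalIntegrable a b
  have hFcont : Continuous F := by
    have := intervalIntegral.continuous_primitive (fun a b => hint a b) (0:ℝ)
    exact this
  -- general: window integral zero gives F periodic
  have key : ∀ r : ℝ, (∀ x : ℝ, ∫ t in (x - r)..(x + r), f t = 0) →
      ∀ x : ℝ, F (x + 2 * r) = F x := by
    intro r hrz x
    have h0 : ∫ t in x..(x + 2 * r), f t = 0 := by
      have := hrz (x + r)
      have e1 : x + r - r = x := by ring
      have e2 : x + r + r = x + 2 * r := by ring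
      rwa [e1, e2] at this
    have : F (x + 2 * r) = F x + ∫ t in x..(x + 2 * r), f t := by
      rw [hF]
      exact (intervalIntegral.integral_add_adjacent_intervals (hint 0 x) (hint x _)).symm
    rw [this, h0, add_zero]
  -- period subgroup
  let G : AddSubgroup ℝ :=
    { carrier := {p : ℝ | ∀ x : ℝ, F (x + p) = F x}
      zero_mem' := by intro x; simp
      add_mem' := by
        intro a b ha hb x
        have := ha (x + b)
        rw [hb x] at this
        calc F (x + (a + b)) = F (x + b + a) := by ring_nf
          _ = F x := this
      neg_mem' := by
        intro a ha x
        have := ha (x + -a)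
        calc F (x + -a) = F (x + -a + a) := by rw [this]
          _ = F x := by ring_nf }
  have hGclosed : IsClosed (G : Set ℝ) := by
    have : (G : Set ℝ) = ⋂ x : ℝ, {p : ℝ | F (x + p) = F x} := by
      ext p; simp only [Set.mem_iInter]; rfl
    rw [this]
    exact isClosed_iInter fun x =>
      isClosed_eq (hFcont.comp (continuous_const.add continuous_id)) continuous_const
  have hm₁ : (2 * r₁ : ℝ) ∈ G := fun x => key r₁ h₁ x
  have hm₂ : (2 * r₂ : ℝ) ∈ G := fun x => key r₂ h₂ x
  -- G is dense (otherwise cyclic, contradicting irrationality)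
  have hdense : Dense (G : Set ℝ) := by
    rcases AddSubgroup.dense_or_cyclic G with hd | ⟨a, ha⟩
    · exact hd
    · exfalso
      rw [ha] at hm₁ hm₂
      rcases AddSubgroup.mem_closure_singleton.mp hm₁ with ⟨m, hm⟩
      rcases AddSubgroup.mem_closure_singleton.mp hm₂ with ⟨n, hn⟩
      have ha0 : a ≠ 0 := by
        rintro rfl
        simp at hn
        nlinarith
      have hn0 : (n : ℝ) ≠ 0 := by
        rintro h
        rw [zsmul_eq_mul, h, zero_mul] at hn
        nlinarith
      apply hirr
      refine ⟨(m : ℚ) / (n : ℚ), ?_⟩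
      push_cast
      rw [zsmul_eq_mul] at hm hn
      field_simp
      linear_combination ((n:ℝ)/2) * hm - ((m:ℝ)/2) * hn
  -- so G = ⊤, hence F is constant, F = F 0 = 0
  have hall : ∀ p : ℝ, p ∈ G := by
    intro p
    have : (G : Set ℝ) = Set.univ := by
      rw [← hGclosed.closure_eq]; exact hdense.closure_eq
    simp [← SetLike.mem_coe, this]
  have hFzero : ∀ x : ℝ, F x = 0 := by
    intro x
    have h := hall x 0
    have h0 : F 0 = 0 := by simp [hF]
    rw [zero_add] at h
    rw [h, h0]
  -- conclude f = 0 via derivative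
  funext x
  have hd : HasDerivAt F (f x) x :=
    intervalIntegral.integral_hasDerivAt_right (hint 0 x)
      (hf.stronglyMeasurableAtFilter _ _) hf.continuousAt
  have hd0 : HasDerivAt F 0 x := by
    have : F = fun _ => (0:ℂ) := funext hFzero
    rw [this]
    exact hasDerivAt_const x 0
  have := hd.unique hd0
  simpa using this
end
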